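/- arXiv:1601.02662 — 8 statements merged into one kernel-verified Lean document; each statement's English description precedes it below -/
import Mathlib

section
/- Let G be a finite connected simple graph admitting a disjunctive set-indexer f with respect to X such that the family f(V(G)) of vertex labels is a topology on X. Then f(V(G)) = f∪(E(G)) ∪ {∅}, i.e., the collection of vertex labels equals the collection of edge labels together with the empty set. -/
/-- The induced edge-labeling of a disjunctive set-labeling: the label of an
edge is the union of the labels of its endpoints. -/
def unionLabel {V X : Type*} [DecidableEq X] (f : V → Finset X) : Sym2 V → Finset X :=
  Sym2.lift ⟨fun u v => f u ∪ f v, fun u v => Finset.union_comm (f u) (f v)⟩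

/-- A disjunctive set-indexer of a graph `G`: an injective vertex labeling by
subsets of a ground set whose induced edge labeling (by unions) is injective
on the edge set. -/
def IsDSI {V X : Type*} [DecidableEq X] (G : SimpleGraph V) (f : V → Finset X) : Prop :=
  Function.Injective f ∧ Set.InjOn (unionLabel f) G.edgeSet
/-- A family `T` of subsets of a finite set `X` is a topology on `X` if it
contains `∅` and `X` and is closed under pairwise unions and intersections. -/
def IsTopologyOn (X : Type*) [Fintype X] [DecidableEq X] (T : Set (Finset X)) : Prop :=
  ∅ ∈ T ∧ (Finset.univ : Finset X) ∈ T ∧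
    (∀ A ∈ T, ∀ B ∈ T, A ∪ B ∈ T) ∧ (∀ A ∈ T, ∀ B ∈ T, A ∩ B ∈ T)

/-!
Closure under unions makes every edge label a vertex label, and a nonempty one since two distinct
vertices cannot both carry `∅`. A connected graph has at least `|V| - 1` edges, and their labels
are distinct, so they exhaust the `|V| - 1` nonempty vertex labels.
-/

section

variable {V X : Type*} [DecidableEq X]

lemma unionLabel_image_edgeSet_subset {G : SimpleGraph V} {f : V → Finset X}
    (hf : Function.Injective f) (hunion : ∀ u v, f u ∪ f v ∈ Set.range f) :
    unionLabel f '' G.edgeSet ⊆ Set.range f \ {∅} := by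
  rintro _ ⟨e, he, rfl⟩
  induction e using Sym2.ind with
  | _ u v =>
    refine ⟨hunion u v, fun huv => G.ne_of_adj he (hf ?_)⟩
    obtain ⟨hu, hv⟩ := Finset.union_eq_empty.mp huv
    rw [hu, hv]

lemma IsDSI.ncard_range_le_ncard_image_edgeSet_add_one {G : SimpleGraph V} {f : V → Finset X}
    (hf : IsDSI G f) (hG : G.Connected) :
    (Set.range f).ncard ≤ (unionLabel f '' G.edgeSet).ncard + 1 := by
  rw [Set.ncard_range_of_injective hf.1, hf.2.ncard_image, ← Nat.card_coe_set_eq]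
  exact hG.card_vert_le_card_edgeSet_add_one

end

theorem DSI_topology_vertex_labels_eq_general {V X : Type*} [Fintype X] [DecidableEq X]
    (G : SimpleGraph V) (hG : G.Connected) (f : V → Finset X) (hf : IsDSI G f)
    (htop : IsTopologyOn X (Set.range f)) :
    Set.range f = unionLabel f '' G.edgeSet ∪ {∅} := by
  obtain ⟨hempty, -, hunion, -⟩ := htop
  have hsub : unionLabel f '' G.edgeSet ⊆ Set.range f \ {∅} :=
    unionLabel_image_edgeSet_subset hf.1 fun u v => hunion _ ⟨u, rfl⟩ _ ⟨v, rfl⟩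
  have hcard : (Set.range f \ {∅}).ncard ≤ (unionLabel f '' G.edgeSet).ncard := by
    rw [Set.ncard_sdiff_singleton_of_mem hempty]
    have := hf.ncard_range_le_ncard_image_edgeSet_add_one hG
    omega
  rw [Set.eq_of_subset_of_ncard_le hsub hcard (Set.toFinite _), Set.sdiff_union_self,
    Set.union_eq_self_of_subset_right (Set.singleton_subset_iff.mpr hempty)]

/-- If a connected graph admits a disjunctive set-indexer whose vertex labels
form a topology on the ground set, then the vertex labels are exactly the edge
labels together with the empty set. -/
theorem DSI_topology_vertex_labels_eq {V X : Type*} [Fintype V] [Fintype X] [DecidableEq X]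
    (G : SimpleGraph V) (hG : G.Connected) (f : V → Finset X) (hf : IsDSI G f)
    (htop : IsTopologyOn X (Set.range f)) :
    Set.range f = unionLabel f '' G.edgeSet ∪ {∅} :=
  DSI_topology_vertex_labels_eq_general G hG f hf htop
end

section
/- Let G be a finite connected simple graph admitting a conjunctive set-indexer f with respect to X such that the family f(V(G)) of vertex labels is a topology on X. Then f(V(G)) = f∩(E(G)) ∪ {X}, i.e., the collection of vertex labels equals the collection of edge labels together with the ground set X. -/
/-- The induced edge-labeling of a conjunctive set-labeling: the label of an
edge is the intersection of the labels of its endpoints. -/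
def interLabel {V X : Type*} [DecidableEq X] (f : V → Finset X) : Sym2 V → Finset X :=
  Sym2.lift ⟨fun u v => f u ∩ f v, fun u v => Finset.inter_comm (f u) (f v)⟩

/-- A conjunctive set-indexer of a graph `G`: an injective vertex labeling by
subsets of a ground set whose induced edge labeling (by intersections) is
injective on the edge set. -/
def IsCSI {V X : Type*} [DecidableEq X] (G : SimpleGraph V) (f : V → Finset X) : Prop :=
  Function.Injective f ∧ Set.InjOn (interLabel f) G.edgeSet
/-! The edge labels are intersections of vertex labels, so they lie in the topology, and none of
them is `X` since `f` is injective; together with `X` they number `|E(G)| + 1` by injectivity of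
`f∩`. A connected graph has at least `|V(G)| - 1` edges, so these labels exhaust the `|V(G)|`
vertex labels. -/

section

variable {V X : Type*} [DecidableEq X]

@[simp]
lemma interLabel_mk (f : V → Finset X) (u v : V) : interLabel f s(u, v) = f u ∩ f v := rfl

lemma range_interLabel_subset_range {f : V → Finset X}
    (hf : ∀ A ∈ Set.range f, ∀ B ∈ Set.range f, A ∩ B ∈ Set.range f) :
    Set.range (interLabel f) ⊆ Set.range f := by
  rintro _ ⟨e, rfl⟩
  induction e using Sym2.ind with
  | _ u v => exact hf _ ⟨u, rfl⟩ _ ⟨v, rfl⟩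

lemma interLabel_ne_univ [Fintype X] {G : SimpleGraph V} {f : V → Finset X}
    (hf : Function.Injective f) {e : Sym2 V} (he : e ∈ G.edgeSet) :
    interLabel f e ≠ Finset.univ := by
  induction e using Sym2.ind with
  | _ u v =>
    intro h
    rw [interLabel_mk, Finset.inter_eq_univ] at h
    exact G.ne_of_adj he (hf (h.1.trans h.2.symm))

lemma IsCSI.ncard_image_interLabel {G : SimpleGraph V} {f : V → Finset X} (hf : IsCSI G f) :
    (interLabel f '' G.edgeSet).ncard = Nat.card G.edgeSet := by
  rw [hf.2.ncard_image, Nat.card_coe_set_eq]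

end

theorem CSI_topology_vertex_labels_eq_general {V X : Type*} [Fintype X] [DecidableEq X]
    (G : SimpleGraph V) (hG : G.Connected) (f : V → Finset X) (hf : IsCSI G f)
    (htop : IsTopologyOn X (Set.range f)) :
    Set.range f = interLabel f '' G.edgeSet ∪ {(Finset.univ : Finset X)} := by
  have hsub : interLabel f '' G.edgeSet ∪ {Finset.univ} ⊆ Set.range f :=
    Set.union_subset
      ((Set.image_subset_range _ _).trans (range_interLabel_subset_range htop.2.2.2))
      (Set.singleton_subset_iff.2 htop.2.1)
  have huniv : Finset.univ ∉ interLabel f '' G.edgeSet := by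
    rintro ⟨e, he, h⟩
    exact interLabel_ne_univ hf.1 he h
  refine (Set.eq_of_subset_of_ncard_le hsub ?_ (Set.toFinite _)).symm
  calc (Set.range f).ncard = Nat.card V := Set.ncard_range_of_injective hf.1
    _ ≤ Nat.card G.edgeSet + 1 := hG.card_vert_le_card_edgeSet_add_one
    _ = _ := by
      rw [Set.union_singleton, Set.ncard_insert_of_notMem huniv, hf.ncard_image_interLabel]

/-- If a connected graph admits a conjunctive set-indexer whose vertex labels
form a topology on the ground set, then the vertex labels are exactly the edge
labels together with the ground set. -/
theorem CSI_topology_vertex_labels_eq {V X : Type*} [Fintype V] [Fintype X] [DecidableEq X]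
    (G : SimpleGraph V) (hG : G.Connected) (f : V → Finset X) (hf : IsCSI G f)
    (htop : IsTopologyOn X (Set.range f)) :
    Set.range f = interLabel f '' G.edgeSet ∪ {(Finset.univ : Finset X)} :=
  CSI_topology_vertex_labels_eq_general G hG f hf htop
end

section
/- Let G be a finite connected simple graph admitting a disjunctive set-indexer f with respect to X such that the family f(V(G)) of vertex labels is a topology on X. Then the number of edges of G equals the number of vertices of G minus one. -/
section

open Finset

variable {V X : Type*} [DecidableEq X]

@[simp]
lemma unionLabel_mk (f : V → Finset X) (u v : V) : unionLabel f s(u, v) = f u ∪ f v := rfl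

lemma IsDSI.unionLabel_ne_empty {G : SimpleGraph V} {f : V → Finset X} (hf : IsDSI G f)
    {e : Sym2 V} (he : e ∈ G.edgeSet) : unionLabel f e ≠ ∅ := by
  induction e with
  | h u v =>
    rw [unionLabel_mk, Ne, union_eq_empty]
    rintro ⟨hu, hv⟩
    exact G.ne_of_adj he (hf.1 (hu.trans hv.symm))

lemma IsDSI.card_edgeFinset_le_of_union_mem_range [Fintype V] {G : SimpleGraph V}
    [Fintype G.edgeSet] {f : V → Finset X} (hf : IsDSI G f) (hempty : ∅ ∈ Set.range f)
    (hunion : ∀ u v, f u ∪ f v ∈ Set.range f) :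
    #G.edgeFinset ≤ Fintype.card V - 1 := by
  have hmaps : ∀ e ∈ G.edgeFinset, unionLabel f e ∈ (univ.image f).erase ∅ := by
    intro e he
    rw [SimpleGraph.mem_edgeFinset] at he
    refine mem_erase.2 ⟨hf.unionLabel_ne_empty he, ?_⟩
    induction e with
    | h u v => simpa using hunion u v
  have hinj : Set.InjOn (unionLabel f) G.edgeFinset := by
    simpa only [SimpleGraph.coe_edgeFinset] using hf.2
  calc #G.edgeFinset ≤ #((univ.image f).erase ∅) := card_le_card_of_injOn _ hmaps hinj
    _ = Fintype.card V - 1 := by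
      rw [card_erase_of_mem (by simpa using hempty), card_image_of_injective _ hf.1, card_univ]

lemma SimpleGraph.Connected.card_sub_one_le_card_edgeFinset [Fintype V] {G : SimpleGraph V}
    [Fintype G.edgeSet] (hG : G.Connected) : Fintype.card V - 1 ≤ #G.edgeFinset := by
  have := hG.card_vert_le_card_edgeSet_add_one
  rw [Nat.card_eq_fintype_card, Nat.card_eq_fintype_card, ← SimpleGraph.edgeFinset_card] at this
  omega

end

/-- If a connected graph admits a disjunctive set-indexer whose vertex labels
form a topology on the ground set, then it has exactly one fewer edge than
vertices. -/
theorem DSI_topology_card_edges {V X : Type*} [Fintype V] [Fintype X] [DecidableEq X]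
    (G : SimpleGraph V) [Fintype G.edgeSet] (hG : G.Connected) (f : V → Finset X)
    (hf : IsDSI G f) (htop : IsTopologyOn X (Set.range f)) :
    G.edgeFinset.card = Fintype.card V - 1 := by
  obtain ⟨hempty, -, hunion, -⟩ := htop
  refine le_antisymm (hf.card_edgeFinset_le_of_union_mem_range hempty ?_)
    hG.card_sub_one_le_card_edgeFinset
  exact fun u v => hunion _ ⟨u, rfl⟩ _ ⟨v, rfl⟩
end

section
/- Every finite tree T admits a disjunctive set-indexer f with respect to some finite set X such that the family f(V(T)) of vertex labels is a topology on X. (One may take X of cardinality |V(T)| − 1 and label the vertices, ordered so that each non-root vertex appears after its parent, by a nested chain ∅ ⊂ {a₁} ⊂ {a₁,a₂} ⊂ ⋯ ⊂ X.) -/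
/-!
Root the tree and list its vertices `v₀, …, vₙ` so that distance from the root is nondecreasing;
label `vₖ` by `{0, …, k - 1} ⊆ Fin n`. The labels form a chain from `∅` to `Fin n`, so they are a
topology, and the union label of an edge is the label of its later endpoint. That endpoint is the
child, farther from the root, and a vertex is the child of at most one edge (its parent is the
penultimate vertex of the unique root path), so distinct edges get distinct labels.
-/
open Function

lemma SimpleGraph.IsTree.eq_of_adj_of_dist_lt {V : Type*} {G : SimpleGraph V} (hG : G.IsTree)
    (root : V) {u₁ u₂ v : V} (h₁ : G.Adj u₁ v) (h₂ : G.Adj u₂ v)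
    (hd₁ : G.dist root u₁ < G.dist root v) (hd₂ : G.dist root u₂ < G.dist root v) :
    u₁ = u₂ := by
  classical
  have path_via : ∀ {u}, G.Adj u v → G.dist root u < G.dist root v →
      ∃ p : G.Walk root v, p.IsPath ∧ p.penultimate = u := by
    intro u h hd
    obtain ⟨q, hq, hql⟩ := (hG.connected root u).exists_path_of_dist
    have hv : v ∉ q.support := fun hv =>
      hd.not_ge (hql ▸ (G.dist_le _).trans (q.length_takeUntil_le_length hv))
    exact ⟨q.concat h, hq.concat hv h, q.penultimate_concat h⟩
  obtain ⟨p₁, hp₁, rfl⟩ := path_via h₁ hd₁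
  obtain ⟨p₂, hp₂, rfl⟩ := path_via h₂ hd₂
  rw [(hG.existsUnique_path root v).unique hp₁ hp₂]

lemma Fintype.exists_equiv_fin_lt_of_lt {V β : Type*} [Fintype V] [LinearOrder β] (d : V → β)
    {m : ℕ} (hm : Fintype.card V = m) :
    ∃ r : V ≃ Fin m, ∀ a b, d a < d b → r a < r b := by
  let key : V → β ×ₗ Fin (Fintype.card V) := fun v => toLex (d v, Fintype.equivFin V v)
  have hkey : Injective key := fun a b h =>
    (Fintype.equivFin V).injective (congrArg Prod.snd (toLex.injective h))
  let _ : LinearOrder V := LinearOrder.lift' key hkey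
  let o := Fintype.orderIsoFinOfCardEq V hm
  refine ⟨o.symm.toEquiv, fun a b h => o.symm.strictMono ?_⟩
  show key a < key b
  exact Prod.Lex.toLex_lt_toLex.2 (Or.inl h)

lemma SimpleGraph.exists_adj_lt_of_mem_edgeSet {V β : Type*} [LinearOrder β] {G : SimpleGraph V}
    {r : V → β} (hr : Injective r) {e : Sym2 V} (he : e ∈ G.edgeSet) :
    ∃ u v, G.Adj u v ∧ r u < r v ∧ e = s(u, v) := by
  induction e using Sym2.ind with
  | h a b =>
    rcases (hr.ne (G.ne_of_adj he)).lt_or_gt with h | h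
    · exact ⟨a, b, he, h, rfl⟩
    · exact ⟨b, a, G.adj_symm he, h, Sym2.eq_swap⟩

lemma unionLabel_mk_of_subset {V X : Type*} [DecidableEq X] {f : V → Finset X} {u v : V}
    (h : f u ⊆ f v) : unionLabel f s(u, v) = f v :=
  Finset.union_eq_right.2 h

lemma isDSI_comp_of_strictMono {V β X : Type*} [LinearOrder β] [DecidableEq X]
    (G : SimpleGraph V) {g : β → Finset X} (hg : StrictMono g) {r : V → β} (hr : Injective r)
    (hparent : ∀ ⦃u₁ u₂ v⦄, G.Adj u₁ v → G.Adj u₂ v → r u₁ < r v → r u₂ < r v → u₁ = u₂) :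
    IsDSI G (g ∘ r) := by
  refine ⟨hg.injective.comp hr, fun e₁ he₁ e₂ he₂ heq => ?_⟩
  obtain ⟨u, v, huv, hr₁, rfl⟩ := G.exists_adj_lt_of_mem_edgeSet hr he₁
  obtain ⟨a, b, hab, hr₂, rfl⟩ := G.exists_adj_lt_of_mem_edgeSet hr he₂
  rw [unionLabel_mk_of_subset (f := g ∘ r) (hg.monotone hr₁.le),
    unionLabel_mk_of_subset (f := g ∘ r) (hg.monotone hr₂.le)] at heq
  obtain rfl : v = b := hr (hg.injective heq)
  rw [hparent huv hab hr₁ hr₂]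

lemma isTopologyOn_range_of_monotone {β X : Type*} [LinearOrder β] [Fintype X] [DecidableEq X]
    {g : β → Finset X} (hg : Monotone g) (hbot : ∅ ∈ Set.range g)
    (htop : Finset.univ ∈ Set.range g) : IsTopologyOn X (Set.range g) := by
  refine ⟨hbot, htop, ?_, ?_⟩ <;> rintro _ ⟨a, rfl⟩ _ ⟨b, rfl⟩
  exacts [⟨max a b, hg.map_sup a b⟩, ⟨min a b, hg.map_inf a b⟩]

/-- `finPrefix n k = {0, …, k - 1}`; as `k` runs through `Fin (n + 1)` this is the chain
`∅ ⊂ {0} ⊂ ⋯ ⊂ Fin n`. -/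
def finPrefix (n : ℕ) (k : Fin (n + 1)) : Finset (Fin n) :=
  {i | i.castSucc < k}

lemma finPrefix_strictMono (n : ℕ) : StrictMono (finPrefix n) := by
  intro a b hab
  have hmono : finPrefix n a ⊆ finPrefix n b := by
    intro i hi
    simp only [finPrefix, Finset.mem_filter, Finset.mem_univ, true_and] at hi ⊢
    exact hi.trans hab
  refine (Finset.ssubset_iff_of_subset hmono).2 ⟨a.castLT (hab.trans_le b.le_last), ?_, ?_⟩ <;>
    simp [finPrefix, hab]

lemma finPrefix_zero (n : ℕ) : finPrefix n 0 = ∅ := by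
  simp [finPrefix]

lemma finPrefix_last (n : ℕ) : finPrefix n (Fin.last n) = Finset.univ := by
  simp [finPrefix, Fin.castSucc_lt_last]

/-- Every finite tree admits a disjunctive set-indexer, with respect to a
ground set of cardinality one less than the number of vertices, whose vertex
labels form a topology on the ground set. -/
theorem tree_admits_DSI_topology (V : Type*) [Fintype V] (G : SimpleGraph V)
    (hG : G.IsTree) :
    ∃ n : ℕ, n = Fintype.card V - 1 ∧
      ∃ f : V → Finset (Fin n), IsDSI G f ∧ IsTopologyOn (Fin n) (Set.range f) := by
  obtain ⟨root⟩ := hG.connected.nonempty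
  set n := Fintype.card V - 1
  have hcard : Fintype.card V = n + 1 := by
    have := Fintype.card_pos_iff.2 ⟨root⟩
    omega
  obtain ⟨r, hr⟩ := Fintype.exists_equiv_fin_lt_of_lt (G.dist root) hcard
  have hdist : ∀ ⦃u v⦄, G.Adj u v → r u < r v → G.dist root u < G.dist root v :=
    fun u v h hlt =>
      (hG.dist_ne_of_adj root h).lt_of_le (not_lt.1 fun h' => (hr v u h').asymm hlt)
  refine ⟨n, rfl, finPrefix n ∘ r, ?_, ?_⟩
  · exact isDSI_comp_of_strictMono G (finPrefix_strictMono n) r.injective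
      fun u₁ u₂ v h₁ h₂ hr₁ hr₂ => hG.eq_of_adj_of_dist_lt root h₁ h₂ (hdist h₁ hr₁) (hdist h₂ hr₂)
  · rw [r.surjective.range_comp]
    exact isTopologyOn_range_of_monotone (finPrefix_strictMono n).monotone
      ⟨0, finPrefix_zero n⟩ ⟨Fin.last n, finPrefix_last n⟩
end

section
/- Every finite tree T admits a conjunctive set-indexer f with respect to some finite set X such that the family f(V(T)) of vertex labels is a topology on X. (One may take X of cardinality |V(T)| − 1 and label the vertices, ordered so that each non-root vertex appears after its parent, by a nested descending chain X ⊃ X∖{a₁} ⊃ X∖{a₁,a₂} ⊃ ⋯ ⊃ ∅.) -/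
/-!
Root the tree at a vertex `r` and list its vertices `v₀ = r, v₁, …, vₙ` by increasing distance
from `r`. Label `vₖ` by `{i ∈ Fin n | k ≤ i}`: the labels form a strictly decreasing chain from
`Fin n` down to `∅`, and a chain is closed under `∪` and `∩`. The label of an edge is then the
label of its later endpoint. Every `v ≠ r` has an earlier neighbour, so the later-endpoint map sends
the edges onto the `n` non-root vertices, and since a tree has exactly `n` edges it is injective.
-/

open Finset Function

lemma exists_equivFin_lt_of_lt {V α : Type*} [Fintype V] [LinearOrder α] (d : V → α) :
    ∃ ρ : V ≃ Fin (Fintype.card V), ∀ u v, d u < d v → ρ u < ρ v := by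
  set e := (Fintype.equivFin V).symm
  set σ := Tuple.sort (d ∘ e)
  have hmono : Monotone (d ∘ e ∘ σ) := Tuple.monotone_sort (d ∘ e)
  refine ⟨((σ : Equiv.Perm _).trans e).symm, fun u v h => lt_of_not_ge fun hvu => ?_⟩
  exact (hmono hvu).not_gt (by simpa using h)

lemma SimpleGraph.Connected.exists_adj_dist_lt {V : Type*} {G : SimpleGraph V}
    (hG : G.Connected) {r v : V} (hv : v ≠ r) : ∃ u, G.Adj u v ∧ G.dist r u < G.dist r v := by
  obtain ⟨p, hp⟩ := hG.exists_walk_length_eq_dist v r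
  cases p with
  | nil => exact absurd rfl hv
  | cons h q =>
    refine ⟨_, h.symm, ?_⟩
    rw [G.dist_comm, G.dist_comm (u := r), ← hp, SimpleGraph.Walk.length_cons]
    exact Nat.lt_succ_of_le (SimpleGraph.dist_le q)

lemma SimpleGraph.IsTree.injOn_sup_map_edgeSet {V β : Type*} [Fintype V] [LinearOrder β]
    {G : SimpleGraph V} (hG : G.IsTree) {ρ : V → β} (hρ : Injective ρ) {r : V}
    (hparent : ∀ v ≠ r, ∃ u, G.Adj u v ∧ ρ u < ρ v) :
    Set.InjOn (fun e : Sym2 V => (e.map ρ).sup) G.edgeSet := by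
  classical
  have hroot : ∀ v, ρ r ≤ ρ v := by
    obtain ⟨m, -, hm⟩ := univ.exists_min_image ρ ⟨r, mem_univ r⟩
    obtain rfl | hmr := eq_or_ne m r
    · exact fun v => hm v (mem_univ v)
    · obtain ⟨u, -, hu⟩ := hparent m hmr
      exact absurd (hm u (mem_univ u)) hu.not_ge
  have hlater_ne_root : ∀ {a b}, a ≠ b → ρ a ≤ ρ b → b ≠ r := by
    rintro a b hab hle rfl
    exact hab (hρ (le_antisymm hle (hroot a)))
  rw [← SimpleGraph.coe_edgeFinset]
  refine injOn_of_surjOn_of_card_le (t := (univ.erase r).image ρ) _ ?_ ?_ ?_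
  · rintro ⟨u, v⟩ huv
    have huv : u ≠ v := (SimpleGraph.mem_edgeFinset.mp huv).ne
    rcases le_total (ρ u) (ρ v) with h | h
    · simpa [sup_eq_right.mpr h] using ⟨v, hlater_ne_root huv h, rfl⟩
    · simpa [sup_eq_left.mpr h] using ⟨u, hlater_ne_root huv.symm h, rfl⟩
  · intro b hb
    obtain ⟨v, hv, rfl⟩ : ∃ v ≠ r, ρ v = b := by simpa using hb
    obtain ⟨u, hadj, hlt⟩ := hparent v hv
    exact ⟨s(u, v), SimpleGraph.mem_edgeFinset.mpr hadj, sup_eq_right.mpr hlt.le⟩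
  · have hcard := hG.card_edgeFinset
    rw [card_image_of_injective _ hρ, card_erase_of_mem (mem_univ r), card_univ]
    omega

lemma isCSI_comp_of_strictAnti {V X β : Type*} [DecidableEq X] [LinearOrder β]
    {G : SimpleGraph V} {ρ : V → β} {g : β → Finset X} (hρ : Injective ρ) (hg : StrictAnti g)
    (hedge : Set.InjOn (fun e : Sym2 V => (e.map ρ).sup) G.edgeSet) : IsCSI G (g ∘ ρ) := by
  have hlabel : ∀ e, interLabel (g ∘ ρ) e = g (e.map ρ).sup :=
    Sym2.ind fun u v => (hg.antitone.map_sup (ρ u) (ρ v)).symm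
  refine ⟨hg.injective.comp hρ, fun e he e' he' h => hedge he he' (hg.injective ?_)⟩
  simpa only [hlabel] using h

lemma isTopologyOn_range_of_antitone {X β : Type*} [Fintype X] [DecidableEq X] [LinearOrder β]
    {g : β → Finset X} (hg : Antitone g) (hempty : ∅ ∈ Set.range g)
    (huniv : univ ∈ Set.range g) : IsTopologyOn X (Set.range g) := by
  refine ⟨hempty, huniv, ?_, ?_⟩
  · rintro _ ⟨a, rfl⟩ _ ⟨b, rfl⟩
    exact ⟨a ⊓ b, hg.map_inf a b⟩
  · rintro _ ⟨a, rfl⟩ _ ⟨b, rfl⟩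
    exact ⟨a ⊔ b, hg.map_sup a b⟩

section TailLabel

variable {m : ℕ}

/-- The `k`-th set `X ∖ {0, …, k - 1}` of the descending chain on `X = Fin (m - 1)`. -/
def tailLabel (k : Fin m) : Finset (Fin (m - 1)) :=
  univ.filter fun i => (k : ℕ) ≤ i

lemma mem_tailLabel {k : Fin m} {i : Fin (m - 1)} : i ∈ tailLabel k ↔ (k : ℕ) ≤ i := by
  simp [tailLabel]

lemma strictAnti_tailLabel : StrictAnti (tailLabel (m := m)) := by
  intro k l hkl
  have hk : (k : ℕ) < m - 1 := by omega
  refine (ssubset_iff_of_subset fun i hi => ?_).mpr ⟨⟨k, hk⟩, ?_, ?_⟩ <;>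
    simp only [mem_tailLabel] at * <;> omega

lemma isTopologyOn_range_tailLabel (hm : 0 < m) :
    IsTopologyOn (Fin (m - 1)) (Set.range tailLabel) := by
  refine isTopologyOn_range_of_antitone strictAnti_tailLabel.antitone
    ⟨⟨m - 1, by omega⟩, ?_⟩ ⟨⟨0, hm⟩, ?_⟩
  · ext i; simp only [mem_tailLabel, notMem_empty, iff_false]; omega
  · ext i; simp [mem_tailLabel]

end TailLabel

/-- Every finite tree admits a conjunctive set-indexer, with respect to a
ground set of cardinality one less than the number of vertices, whose vertex
labels form a topology on the ground set. -/
theorem tree_admits_CSI_topology (V : Type*) [Fintype V] (G : SimpleGraph V)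
    (hG : G.IsTree) :
    ∃ n : ℕ, n = Fintype.card V - 1 ∧
      ∃ f : V → Finset (Fin n), IsCSI G f ∧ IsTopologyOn (Fin n) (Set.range f) := by
  obtain ⟨r⟩ := hG.connected.nonempty
  obtain ⟨ρ, hρ⟩ := exists_equivFin_lt_of_lt (G.dist r)
  have hparent : ∀ v ≠ r, ∃ u, G.Adj u v ∧ ρ u < ρ v := fun v hv =>
    (hG.connected.exists_adj_dist_lt hv).imp fun u ⟨hadj, hlt⟩ => ⟨hadj, hρ u v hlt⟩
  refine ⟨_, rfl, tailLabel ∘ ρ, ?_, ?_⟩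
  · exact isCSI_comp_of_strictAnti ρ.injective strictAnti_tailLabel
      (hG.injOn_sup_map_edgeSet ρ.injective hparent)
  · rw [EquivLike.range_comp]
    exact isTopologyOn_range_tailLabel (Fintype.card_pos_iff.mpr ⟨r⟩)
end

section
/- Let G be a finite connected simple graph admitting a graceful disjunctive set-indexer f with respect to X such that the family f(V(G)) of vertex labels is a topology on X. Then f(V(G)) is the discrete topology on X, i.e., f(V(G)) equals the full power set of X. -/
theorem unionLabel_mem_of_union_closed {V X : Type*} [DecidableEq X] {f : V → Finset X}
    {T : Set (Finset X)} (hfT : ∀ v, f v ∈ T) (hT : ∀ A ∈ T, ∀ B ∈ T, A ∪ B ∈ T)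
    (e : Sym2 V) : unionLabel f e ∈ T := by
  induction e using Sym2.ind with
  | _ u v => exact hT _ (hfT u) _ (hfT v)

theorem graceful_DSI_topology_is_discrete_general {V X : Type*} [Fintype X] [DecidableEq X]
    (G : SimpleGraph V) (f : V → Finset X)
    (hgrace : unionLabel f '' G.edgeSet = {A : Finset X | A ≠ ∅})
    (htop : IsTopologyOn X (Set.range f)) :
    Set.range f = Set.univ := by
  refine Set.eq_univ_of_forall fun A => ?_
  rcases eq_or_ne A ∅ with rfl | hA
  · exact htop.1
  · obtain ⟨e, -, rfl⟩ : A ∈ unionLabel f '' G.edgeSet := hgrace ▸ hA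
    exact unionLabel_mem_of_union_closed Set.mem_range_self htop.2.2.1 e

/-- If a connected graph admits a graceful disjunctive set-indexer whose vertex
labels form a topology on the ground set, then the vertex labels form the
discrete topology (the full power set). -/
theorem graceful_DSI_topology_is_discrete {V X : Type*} [Fintype V] [Fintype X] [DecidableEq X]
    (G : SimpleGraph V) (hG : G.Connected) (f : V → Finset X) (hf : IsDSI G f)
    (hgrace : unionLabel f '' G.edgeSet = {A : Finset X | A ≠ ∅})
    (htop : IsTopologyOn X (Set.range f)) :
    Set.range f = Set.univ :=
  graceful_DSI_topology_is_discrete_general G f hgrace htop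
end

section
/- Let G be a finite connected simple graph admitting a conjunctive set-indexer f with respect to X such that f(V(G)) is the discrete topology on X, i.e., f(V(G)) equals the full power set of X. Then f is graceful: the set of edge labels f∩(E(G)) equals the power set of X with the ground set X removed. -/
/-!
An edge label `f u ∩ f v` is never the whole ground set `X`, since then `f u = f v = X`
would contradict injectivity of `f`. The edge labels are pairwise distinct, so there are exactly
`|E|` of them among the `2 ^ |X| - 1` proper subsets. On the other hand `f` is a bijection onto
the power set, so `|V| = 2 ^ |X|`, and a connected graph has `|E| ≥ |V| - 1`.
-/

section

variable {V X : Type*} [DecidableEq X]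

lemma IsCSI.ncard_image_edgeSet {G : SimpleGraph V} {f : V → Finset X} (hf : IsCSI G f) :
    (interLabel f '' G.edgeSet).ncard = G.edgeSet.ncard :=
  hf.2.ncard_image

lemma Set.ncard_setOf_ne {α : Type*} [Finite α] (a : α) :
    {b : α | b ≠ a}.ncard = Nat.card α - 1 := by
  rw [← Set.compl_singleton_eq, Set.ncard_compl, Set.ncard_singleton]

end

theorem CSI_discrete_is_graceful_general {V X : Type*} [Fintype X] [DecidableEq X]
    (G : SimpleGraph V) (hG : G.Connected) (f : V → Finset X) (hf : IsCSI G f)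
    (hfull : Set.range f = Set.univ) :
    interLabel f '' G.edgeSet = {A : Finset X | A ≠ (Finset.univ : Finset X)} := by
  have hcardV : Nat.card V = 2 ^ Fintype.card X := by
    rw [Nat.card_eq_of_bijective f ⟨hf.1, Set.range_eq_univ.mp hfull⟩,
      Nat.card_eq_fintype_card, Fintype.card_finset]
  have hcardE := hG.card_vert_le_card_edgeSet_add_one
  refine Set.eq_of_subset_of_ncard_le ?_ ?_ (Set.toFinite _)
  · rintro _ ⟨e, he, rfl⟩
    exact interLabel_ne_univ hf.1 he
  · rw [Set.ncard_setOf_ne, hf.ncard_image_edgeSet, ← Nat.card_coe_set_eq,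
      Nat.card_eq_fintype_card, Fintype.card_finset]
    omega

/-- If a connected graph admits a conjunctive set-indexer whose vertex labels
form the discrete topology (the full power set) on the ground set, then the
indexer is graceful: the edge labels are exactly the proper subsets. -/
theorem CSI_discrete_is_graceful {V X : Type*} [Fintype V] [Fintype X] [DecidableEq X]
    (G : SimpleGraph V) (hG : G.Connected) (f : V → Finset X) (hf : IsCSI G f)
    (hfull : Set.range f = Set.univ) :
    interLabel f '' G.edgeSet = {A : Finset X | A ≠ (Finset.univ : Finset X)} :=
  CSI_discrete_is_graceful_general G hG f hf hfull
end

section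
/- Let G be a finite connected simple graph admitting a conjunctive set-indexer f with respect to a nonempty finite set X such that f(V(G)) equals the full power set of X. Then G has an even number of vertices and an odd number of edges; in fact |V(G)| = 2^{|X|} and |E(G)| = 2^{|X|} − 1. -/
/-!
The labeling is a bijection `V ≃ 𝒫(X)`, so `|V| = 2^|X|`. An edge can never be labeled `X`:
`f u ∩ f v = X` forces `f u = f v = X`, against injectivity of `f`. Hence the injective edge
labeling takes values in `𝒫(X) \ {X}`, giving `|E| ≤ 2^|X| - 1`, while connectedness gives
`|E| ≥ |V| - 1`. Parity follows from `|X| ≥ 1`.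
-/

open Finset

namespace IsCSI

variable {V X : Type*} [DecidableEq X] {G : SimpleGraph V} {f : V → Finset X}

lemma interLabel_ne_univ [Fintype X] (hf : IsCSI G f) {e : Sym2 V} (he : e ∈ G.edgeSet) :
    interLabel f e ≠ univ := by
  induction e with
  | h u v =>
    intro huv
    obtain ⟨hu, hv⟩ := inter_eq_univ.mp huv
    exact G.ne_of_adj he (hf.1 (hu.trans hv.symm))

lemma card_edgeFinset_lt [Fintype X] [Fintype G.edgeSet] (hf : IsCSI G f) :
    #G.edgeFinset < 2 ^ Fintype.card X := by
  calc #G.edgeFinset ≤ #((univ : Finset (Finset X)).erase univ) :=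
        card_le_card_of_injOn (interLabel f)
          (fun e he ↦ mem_erase.mpr
            ⟨hf.interLabel_ne_univ (G.mem_edgeFinset.mp he), mem_univ _⟩)
          (fun e he e' he' ↦ hf.2 (G.mem_edgeFinset.mp he) (G.mem_edgeFinset.mp he'))
    _ < 2 ^ Fintype.card X := by
        rw [card_erase_of_mem (mem_univ _), card_univ, Fintype.card_finset]
        exact Nat.sub_lt (Nat.two_pow_pos _) one_pos

lemma card_eq_two_pow [Fintype V] [Fintype X] (hf : IsCSI G f) (hfull : Set.range f = Set.univ) :
    Fintype.card V = 2 ^ Fintype.card X := by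
  rw [Fintype.card_of_bijective ⟨hf.1, Set.range_eq_univ.mp hfull⟩, Fintype.card_finset]

end IsCSI

/-- A connected graph with a conjunctive set-indexer whose vertex labels are
the full power set of a nonempty ground set has an even number of vertices and
an odd number of edges; indeed `|V| = 2 ^ |X|` and `|E| = 2 ^ |X| - 1`. -/
theorem graceful_CSI_card {V X : Type*} [Fintype V] [Fintype X] [Nonempty X] [DecidableEq X]
    (G : SimpleGraph V) [Fintype G.edgeSet] (hG : G.Connected) (f : V → Finset X)
    (hf : IsCSI G f) (hfull : Set.range f = Set.univ) :
    Even (Fintype.card V) ∧ Odd G.edgeFinset.card ∧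
      Fintype.card V = 2 ^ Fintype.card X ∧ G.edgeFinset.card = 2 ^ Fintype.card X - 1 := by
  have hV := hf.card_eq_two_pow hfull
  have hconn : Fintype.card V ≤ #G.edgeFinset + 1 := by
    simpa [Nat.card_eq_fintype_card, SimpleGraph.edgeFinset_card] using
      hG.card_vert_le_card_edgeSet_add_one
  have hE : #G.edgeFinset = 2 ^ Fintype.card X - 1 := by
    have := hf.card_edgeFinset_lt
    omega
  have hpow : Even (2 ^ Fintype.card X) := (Nat.even_pow' Fintype.card_ne_zero).mpr even_two
  refine ⟨hV ▸ hpow, ?_, hV, hE⟩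
  rw [hE]
  exact Nat.Even.sub_odd Nat.one_le_two_pow hpow odd_one
end
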